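/- Let α ∈ (0, 1/2], let M be a surjective isometry of ℝ², let R ≥ 5 + 2^{1+1/α} with ‖M(0)‖ ≤ R, and set P = M '' {y : y₁ ≥ 0 and |y₂| ≤ y₁^α} and Q = M '' {y : y₁ ≥ 0 and 2|y₂| ≤ y₁^α}. Let U ⊆ ℝ² satisfy P ⊆ U and Uᶜ ≠ ∅. Then for every x ∈ Q with ‖x‖ ≥ 2R, one has d(x, ∂U) ≥ 2^{−2−α} ‖x‖^α. -/

import Mathlib

/-!
Write `x = M y` with `y` in the narrow cusp. Since `‖M 0‖ ≤ R ≤ ‖x‖ / 2`, the point `y` is far out,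
so `y₁ ≥ 9` and `‖x‖ ≤ 7 y₁ / 3`, whence `r := 2^(-2-α) ‖x‖^α ≤ y₁^α / 3`. Over `[y₁ - r, y₁ + r]`
the concave function `t ↦ t^α` stays above `y₁^α (1 - r / y₁) ≥ y₁^α / 2 + r`, so the ball of
radius `r` about `y` lies in the wide cusp; hence the ball of radius `r` about `x` lies in
`P ⊆ U` and cannot meet `∂U`.
-/

open Metric Set

theorem le_infDist_frontier_of_ball_subset {X : Type*} [PseudoMetricSpace X] [PreconnectedSpace X]
    {U : Set X} {x : X} {r : ℝ} (hball : ball x r ⊆ U) (hUc : Uᶜ.Nonempty) :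
    r ≤ infDist x (frontier U) := by
  rcases le_or_gt r 0 with hr | hr
  · exact hr.trans infDist_nonneg
  have hfr : (frontier U).Nonempty := nonempty_frontier_iff.mpr
    ⟨⟨x, hball (mem_ball_self hr)⟩, fun hU ↦ hUc.ne_empty (compl_empty_iff.mpr hU)⟩
  refine (le_infDist hfr).mpr fun p hp ↦ not_lt.mp fun hpx ↦ hp.2 ?_
  exact interior_maximal hball isOpen_ball (mem_ball'.mpr hpx)

theorem Isometry.abs_norm_sub_norm_le {E F : Type*} [SeminormedAddCommGroup E]
    [SeminormedAddCommGroup F] {f : E → F} (hf : Isometry f) (y : E) :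
    |‖f y‖ - ‖y‖| ≤ ‖f 0‖ := by
  have hy : ‖y‖ = ‖f y - f 0‖ := by rw [← dist_eq_norm, hf.dist_eq, dist_zero_right]
  simpa [hy] using _root_.abs_norm_sub_norm_le (f y) (f y - f 0)

theorem EuclideanSpace.norm_le_abs_add_abs (y : EuclideanSpace ℝ (Fin 2)) :
    ‖y‖ ≤ |y 0| + |y 1| := by
  rw [EuclideanSpace.norm_eq, Fin.sum_univ_two, Real.sqrt_le_left (by positivity)]
  simp only [Real.norm_eq_abs]
  nlinarith [abs_nonneg (y 0), abs_nonneg (y 1)]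

namespace Real

theorem rpow_sq_le_self {α c : ℝ} (hα : α ≤ 1 / 2) (hc : 1 ≤ c) : (c ^ α) ^ 2 ≤ c := by
  rw [← rpow_natCast, ← rpow_mul (by linarith)]
  exact rpow_le_self_of_one_le hc (by push_cast; linarith)

theorem three_mul_rpow_le_self {α c : ℝ} (hα : α ≤ 1 / 2) (hc : 9 ≤ c) : 3 * c ^ α ≤ c := by
  have hsq := rpow_sq_le_self hα (by linarith : 1 ≤ c)
  nlinarith [rpow_nonneg (by linarith : (0 : ℝ) ≤ c) α]

theorem mul_one_sub_div_le_rpow_sub {α c r : ℝ} (hα : α ≤ 1) (hc : 0 < c) (hr : 0 ≤ r)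
    (hrc : r ≤ c) : c ^ α * (1 - r / c) ≤ (c - r) ^ α := by
  have hu : 0 ≤ 1 - r / c := sub_nonneg.mpr ((div_le_one hc).mpr hrc)
  calc c ^ α * (1 - r / c) ≤ c ^ α * (1 - r / c) ^ α := by
        gcongr
        exact self_le_rpow_of_le_one hu (by linarith [div_nonneg hr hc.le]) hα
    _ = (c - r) ^ α := by
        rw [← mul_rpow hc.le hu, mul_one_sub, mul_div_cancel₀ _ hc.ne']

theorem two_rpow_neg_two_sub_mul_rpow_le {α s c : ℝ} (hα0 : 0 ≤ α) (hα1 : α ≤ 1) (hs : 0 ≤ s)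
    (hsc : s ≤ 7 / 3 * c) : 2 ^ (-2 - α) * s ^ α ≤ c ^ α / 3 := by
  have hc : 0 ≤ c := by linarith
  calc 2 ^ (-2 - α) * s ^ α = (s / 2) ^ α / 4 := by
        rw [div_rpow hs zero_le_two, rpow_sub zero_lt_two, rpow_neg zero_le_two]
        norm_num
        ring
    _ ≤ (7 / 6 * c) ^ α / 4 := by gcongr; linarith
    _ = (7 / 6) ^ α * c ^ α / 4 := by rw [mul_rpow (by norm_num) hc]
    _ ≤ 7 / 6 * c ^ α / 4 := by gcongr; exact rpow_le_self_of_one_le (by norm_num) hα1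
    _ ≤ c ^ α / 3 := by linarith [rpow_nonneg hc α]

end Real

open Real in
theorem ball_subset_cusp {α r : ℝ} (hα0 : 0 ≤ α) (hα1 : α ≤ 1) {y : EuclideanSpace ℝ (Fin 2)}
    (hy : 2 * |y 1| ≤ y 0 ^ α) (hyc : 3 * y 0 ^ α ≤ y 0) (hr : r ≤ y 0 ^ α / 3) :
    ball y r ⊆ {z : EuclideanSpace ℝ (Fin 2) | 0 ≤ z 0 ∧ |z 1| ≤ z 0 ^ α} := by
  intro z hz
  have hzy : dist z y < r := mem_ball.mp hz
  have hr0 : 0 < r := dist_nonneg.trans_lt hzy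
  have hc : 0 < y 0 := by linarith
  have h0 : |z 0 - y 0| < r := (PiLp.dist_apply_le z y 0).trans_lt hzy
  have h1 : |z 1 - y 1| < r := (PiLp.dist_apply_le z y 1).trans_lt hzy
  have hz0 : y 0 - r ≤ z 0 := by linarith [(abs_lt.mp h0).1]
  have hslope : y 0 ^ α * (r / y 0) ≤ r / 3 := by rw [← mul_div_assoc, div_le_iff₀ hc]; nlinarith
  refine ⟨by linarith, ?_⟩
  calc |z 1| ≤ |y 1| + |z 1 - y 1| := by linarith [abs_sub_abs_le_abs_sub (z 1) (y 1)]
    _ ≤ y 0 ^ α * (1 - r / y 0) := by linarith [mul_one_sub (y 0 ^ α) (r / y 0)]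
    _ ≤ (y 0 - r) ^ α := mul_one_sub_div_le_rpow_sub hα1 hc hr0.le (by linarith)
    _ ≤ z 0 ^ α := rpow_le_rpow (by linarith) hz0 hα0

theorem nine_le_of_two_abs_le_rpow {α : ℝ} (hα0 : 0 ≤ α) (hα : α ≤ 1 / 2)
    {y : EuclideanSpace ℝ (Fin 2)} (hy0 : 0 ≤ y 0) (hy : 2 * |y 1| ≤ y 0 ^ α) (hny : 11 ≤ ‖y‖) :
    9 ≤ y 0 := by
  by_contra! hc
  have ht : y 0 ^ α < 3 := by
    rcases le_or_gt (y 0) 1 with hc1 | hc1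
    · linarith [Real.rpow_le_one hy0 hc1 hα0]
    · nlinarith [Real.rpow_sq_le_self hα hc1.le, Real.rpow_nonneg hy0 α]
  linarith [y.norm_le_abs_add_abs, abs_of_nonneg hy0]

theorem dist_to_frontier_estimate (α : ℝ) (hα : 0 < α) (hα' : α ≤ 1 / 2)
    (M : EuclideanSpace ℝ (Fin 2) ≃ᵢ EuclideanSpace ℝ (Fin 2))
    (R : ℝ) (hR : 5 + 2 ^ (1 + 1 / α) ≤ R) (hRM : ‖M 0‖ ≤ R)
    (P Q : Set (EuclideanSpace ℝ (Fin 2)))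
    (hP : P = M '' {y : EuclideanSpace ℝ (Fin 2) | 0 ≤ y 0 ∧ |y 1| ≤ (y 0) ^ α})
    (hQ : Q = M '' {y : EuclideanSpace ℝ (Fin 2) | 0 ≤ y 0 ∧ 2 * |y 1| ≤ (y 0) ^ α})
    (U : Set (EuclideanSpace ℝ (Fin 2))) (hPU : P ⊆ U) (hUc : Uᶜ.Nonempty)
    (x : EuclideanSpace ℝ (Fin 2)) (hxQ : x ∈ Q) (hx : 2 * R ≤ ‖x‖) :
    2 ^ (-2 - α) * ‖x‖ ^ α ≤ infDist x (frontier U) := by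
  obtain ⟨y, ⟨hy0, hy⟩, rfl⟩ := hQ ▸ hxQ
  have h8 : (8 : ℝ) ≤ 2 ^ (1 + 1 / α) := calc
    (8 : ℝ) = 2 ^ (3 : ℝ) := by norm_num
    _ ≤ 2 ^ (1 + 1 / α) := Real.rpow_le_rpow_of_exponent_le one_le_two
      (by linarith [(le_div_iff₀ hα).mpr (by linarith : 2 * α ≤ 1)])
  have hMy := abs_le.mp (M.isometry.abs_norm_sub_norm_le y)
  have hc := nine_le_of_two_abs_le_rpow hα.le hα' hy0 hy (by linarith)
  have htc := Real.three_mul_rpow_le_self hα' hc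
  have hMyc : ‖M y‖ ≤ 7 / 3 * y 0 := by
    linarith [y.norm_le_abs_add_abs, abs_of_nonneg hy0]
  have hball : ball (M y) (2 ^ (-2 - α) * ‖M y‖ ^ α) ⊆ U := by
    rw [← M.image_ball]
    refine (image_mono (ball_subset_cusp hα.le (by linarith) hy htc ?_)).trans (hP ▸ hPU)
    exact Real.two_rpow_neg_two_sub_mul_rpow_le hα.le (by linarith) (norm_nonneg _) hMyc
  exact le_infDist_frontier_of_ball_subset hball hUc
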